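/- Let G = (V, E, w) be a weighted directed graph with integer weights and no negative-weight cycle, and let s ∈ V be such that every vertex of V is reachable from s by a walk. Let G_{≥0} = (V, E, w_{≥0}) where w_{≥0}(e) = max(w(e), 0). For d : V → ℤ define relax(d)(v) = min(d(v), min over (u,v) ∈ E of d(u) + w(u,v)) and cl(d)(v) = min over u ∈ V of (d(u) + dist_{G_{≥0}}(u, v)). Suppose d(v) ≥ dist_G(s, v) for every v ∈ V. Then: (1) cl(relax(d))(v) ≥ dist_G(s, v) for every v ∈ V; and (2) if, in addition, for some i ∈ ℕ, d(v) = dist_G(s, v) holds for every v that admits a minimum-weight s→v walk containing at most i negative-weight edges, then cl(relax(d))(v) = dist_G(s, v) for every v that admits a minimum-weight s→v walk containing at most i+1 negative-weight edges. -/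
import Mathlib


open Real

/-- A walk from `u` to `v` along the edge set `E`; the list records the vertices
visited after `u` (so `[]` is the empty walk, requiring `u = v`). -/
def IsWalk {V : Type*} (E : Set (V × V)) : V → V → List V → Prop
  | u, v, [] => u = v
  | u, v, x :: xs => (u, x) ∈ E ∧ IsWalk E x v xs

/-- The weight of a walk starting at `u` whose subsequent vertices are given by the list. -/
def walkWeight {V : Type*} (w : V × V → ℤ) : V → List V → ℤ
  | _, [] => 0
  | u, x :: xs => w (u, x) + walkWeight w x xs

/-- The number of negative-weight edges on a walk. -/
def countNeg {V : Type*} (w : V × V → ℤ) : V → List V → ℕ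
  | _, [] => 0
  | u, x :: xs => (if w (u, x) < 0 then 1 else 0) + countNeg w x xs

/-- `dist_G(u,v) ≤ r` : there exists a walk from `u` to `v` of weight at most `r`. -/
def DistLE {V : Type*} (E : Set (V × V)) (w : V × V → ℤ) (u v : V) (r : ℝ) : Prop :=
  ∃ p, IsWalk E u v p ∧ (walkWeight w u p : ℝ) ≤ r

/-- `Ball^in_G(v, r) = {u : dist_G(u,v) ≤ r}`. -/
def ballIn {V : Type*} (E : Set (V × V)) (w : V × V → ℤ) (v : V) (r : ℝ) : Set V :=
  {u | DistLE E w u v r}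

/-- `Ball^out_G(u, r) = {v : dist_G(u,v) ≤ r}`. -/
def ballOut {V : Type*} (E : Set (V × V)) (w : V × V → ℤ) (u : V) (r : ℝ) : Set V :=
  {v | DistLE E w u v r}

/-- There is a walk from `u` to `v`. -/
def Reach {V : Type*} (E : Set (V × V)) (u v : V) : Prop := ∃ p, IsWalk E u v p

/-- `u` and `v` lie in the same strongly connected component. -/
def SameSCC {V : Type*} (E : Set (V × V)) (u v : V) : Prop := Reach E u v ∧ Reach E v u

/-- `C` is a strongly connected component (an equivalence class of `SameSCC`). -/
def IsSCCOf {V : Type*} (E : Set (V × V)) (C : Set V) : Prop :=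
  ∃ v, C = {u | SameSCC E u v}

/-- `D` is the (attained) minimum weight of a walk from `u` to `v`. -/
def IsMinDist {V : Type*} (E : Set (V × V)) (w : V × V → ℤ) (u v : V) (D : ℤ) : Prop :=
  (∃ p, IsWalk E u v p ∧ walkWeight w u p = D) ∧
    ∀ p, IsWalk E u v p → D ≤ walkWeight w u p

lemma isWalk_append {V : Type*} (E : Set (V × V)) :
    ∀ (p : List V) {s m v : V} (q : List V),
      IsWalk E s m p → IsWalk E m v q → IsWalk E s v (p ++ q)
  | [], s, m, v, q, hp, hq => by cases hp; exact hq
  | x :: xs, s, m, v, q, hp, hq =>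
    ⟨hp.1, isWalk_append E xs q hp.2 hq⟩

lemma walkWeight_append {V : Type*} (E : Set (V × V)) (w : V × V → ℤ) :
    ∀ (p : List V) {s m : V} (q : List V), IsWalk E s m p →
      walkWeight w s (p ++ q) = walkWeight w s p + walkWeight w m q
  | [], s, m, q, hp => by cases hp; simp [walkWeight]
  | x :: xs, s, m, q, hp => by
    show w (s, x) + walkWeight w x (xs ++ q) = w (s, x) + walkWeight w x xs + walkWeight w m q
    rw [walkWeight_append E w xs q hp.2]; ring

lemma countNeg_append {V : Type*} (E : Set (V × V)) (w : V × V → ℤ) :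
    ∀ (p : List V) {s m : V} (q : List V), IsWalk E s m p →
      countNeg w s (p ++ q) = countNeg w s p + countNeg w m q
  | [], s, m, q, hp => by cases hp; simp [countNeg]
  | x :: xs, s, m, q, hp => by
    show (if w (s, x) < 0 then 1 else 0) + countNeg w x (xs ++ q)
        = (if w (s, x) < 0 then 1 else 0) + countNeg w x xs + countNeg w m q
    rw [countNeg_append E w xs q hp.2]; ring

lemma walkWeight_le_w0 {V : Type*} (w w0 : V × V → ℤ) (hw0 : ∀ e, w0 e = max (w e) 0) :
    ∀ (p : List V) (s : V), walkWeight w s p ≤ walkWeight w0 s p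
  | [], s => le_refl 0
  | x :: xs, s => by
    simp only [walkWeight]
    exact add_le_add (by rw [hw0]; exact le_max_left _ _) (walkWeight_le_w0 w w0 hw0 xs x)

lemma walkWeight_w0_eq {V : Type*} (w w0 : V × V → ℤ) (hw0 : ∀ e, w0 e = max (w e) 0) :
    ∀ (p : List V) (s : V), countNeg w s p = 0 → walkWeight w0 s p = walkWeight w s p
  | [], s, _ => rfl
  | x :: xs, s, h => by
    simp only [countNeg, Nat.add_eq_zero] at h
    have h1 : ¬ w (s, x) < 0 := by
      intro hlt; simp [hlt] at h
    simp only [walkWeight, walkWeight_w0_eq w w0 hw0 xs x h.2, hw0,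
      max_eq_left (not_lt.mp h1)]

/-- Split a walk containing a negative edge at its last negative edge. -/
lemma split_last_neg {V : Type*} (E : Set (V × V)) (w : V × V → ℤ) :
    ∀ (p : List V) (s v : V), IsWalk E s v p → 0 < countNeg w s p →
      ∃ (p₁ : List V) (m x : V) (p₂ : List V),
        p = p₁ ++ x :: p₂ ∧ IsWalk E s m p₁ ∧ (m, x) ∈ E ∧ w (m, x) < 0 ∧
          IsWalk E x v p₂ ∧ countNeg w x p₂ = 0
  | [], s, v, _, hc => absurd hc (by simp [countNeg])
  | a :: rest, s, v, hp, hc => by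
    rcases Nat.eq_zero_or_pos (countNeg w a rest) with h0 | hpos
    · have hneg : w (s, a) < 0 := by
        by_contra hge
        simp [countNeg, hge, h0] at hc
      exact ⟨[], s, a, rest, rfl, rfl, hp.1, hneg, hp.2, h0⟩
    · obtain ⟨p₁, m, x, p₂, heq, hw1, hE, hneg, hw2, hc0⟩ :=
        split_last_neg E w rest a v hp.2 hpos
      exact ⟨a :: p₁, m, x, p₂, by rw [heq]; rfl, ⟨hp.1, hw1⟩, hE, hneg, hw2, hc0⟩

/-- Correctness invariant of one epoch of `EstDist`: if `d ≥ dist_G(s,·)`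
pointwise, then `cl(relax(d)) ≥ dist_G(s,·)` pointwise; and if moreover `d` agrees with
`dist_G(s,·)` on all vertices admitting a minimum-weight walk from `s` with at most `i`
negative edges, then `cl(relax(d))` agrees with `dist_G(s,·)` on all vertices admitting a
minimum-weight walk from `s` with at most `i+1` negative edges. Here `relax` is one
Bellman–Ford relaxation and `cl` is the shortest-path closure in `G_{≥0}` (weights
`max (w e) 0`), both characterized as attained minima. -/
theorem estdist_epoch_invariant {V : Type*} [Fintype V] (E : Set (V × V)) (w : V × V → ℤ)
    (hnc : ¬ ∃ (u : V) (p : List V), IsWalk E u u p ∧ walkWeight w u p < 0)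
    (s : V) (hreach : ∀ v : V, ∃ p, IsWalk E s v p)
    (dist : V → ℤ)
    (hdist : ∀ v : V,
      IsLeast {x : ℤ | ∃ p, IsWalk E s v p ∧ walkWeight w s p = x} (dist v))
    (d : V → ℤ) (hd : ∀ v : V, dist v ≤ d v)
    (d' : V → ℤ)
    (hd' : ∀ v : V,
      IsLeast (insert (d v) {x : ℤ | ∃ u : V, (u, v) ∈ E ∧ x = d u + w (u, v)}) (d' v))
    (w0 : V × V → ℤ) (hw0 : ∀ e : V × V, w0 e = max (w e) 0)
    (d'' : V → ℤ)
    (hd'' : ∀ v : V,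
      IsLeast {x : ℤ | ∃ (u : V) (q : List V),
        IsWalk E u v q ∧ x = d' u + walkWeight w0 u q} (d'' v)) :
    (∀ v : V, dist v ≤ d'' v) ∧
    (∀ i : ℕ,
      (∀ v : V, (∃ p, IsWalk E s v p ∧ walkWeight w s p = dist v ∧ countNeg w s p ≤ i) →
        d v = dist v) →
      ∀ v : V, (∃ p, IsWalk E s v p ∧ walkWeight w s p = dist v ∧ countNeg w s p ≤ i + 1) →
        d'' v = dist v) := by
  -- dist is a lower bound through any walk, for any starting estimate ≥ dist
  have hdist_le : ∀ (u v : V) (q : List V), IsWalk E u v q →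
      dist v ≤ dist u + walkWeight w u q := by
    intro u v q hq
    obtain ⟨p, hp, hwp⟩ := (hdist u).1
    have := (hdist v).2 ⟨p ++ q, isWalk_append E p q hp hq,
      walkWeight_append E w p q hp⟩
    rwa [hwp] at this
  -- dist u ≤ d' u
  have hdist_d' : ∀ u : V, dist u ≤ d' u := by
    intro u
    rcases (hd' u).1 with h | ⟨x, hxE, hx⟩
    · rw [h]; exact hd u
    · rw [hx]
      calc dist u ≤ dist x + w (x, u) := by
            have := hdist_le x u [u] ⟨hxE, rfl⟩
            simpa [walkWeight] using this
        _ ≤ d x + w (x, u) := by linarith [hd x]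
  have part1 : ∀ v : V, dist v ≤ d'' v := by
    intro v
    obtain ⟨u, q, hq, hval⟩ := (hd'' v).1
    calc dist v ≤ dist u + walkWeight w u q := hdist_le u v q hq
      _ ≤ d' u + walkWeight w0 u q :=
          add_le_add (hdist_d' u) (walkWeight_le_w0 w w0 hw0 q u)
      _ = d'' v := hval.symm
  refine ⟨part1, fun i H v hv => ?_⟩
  obtain ⟨p, hp, hwp, hcn⟩ := hv
  have hle : d'' v ≤ dist v := by
    rcases Nat.eq_zero_or_pos (countNeg w s p) with h0 | hpos
    · -- no negative edges: use u = s, q = p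
      have hds : dist s = 0 := by
        have h1 : dist s ≤ 0 := (hdist s).2 ⟨[], rfl, rfl⟩
        have h2 : (0 : ℤ) ≤ dist s := by
          obtain ⟨p', hp', hwp'⟩ := (hdist s).1
          by_contra hlt
          exact hnc ⟨s, p', hp', by omega⟩
        omega
      have hdseq : d s = dist s :=
        H s ⟨[], rfl, by rw [hds]; rfl, Nat.zero_le i⟩
      have h1 : d'' v ≤ d' s + walkWeight w0 s p :=
        (hd'' v).2 ⟨s, p, hp, rfl⟩
      have h2 : d' s ≤ d s := (hd' s).2 (Set.mem_insert _ _)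
      have h3 : walkWeight w0 s p = walkWeight w s p :=
        walkWeight_w0_eq w w0 hw0 p s h0
      rw [h3, hwp] at h1
      omega
    · obtain ⟨p₁, m, x, p₂, heq, hw1, hE, hneg, hw2, hc0⟩ :=
        split_last_neg E w p s v hp hpos
      have hwsplit : walkWeight w s p =
          walkWeight w s p₁ + (w (m, x) + walkWeight w x p₂) := by
        rw [heq, walkWeight_append E w p₁ (x :: p₂) hw1]; rfl
      have hcsplit : countNeg w s p =
          countNeg w s p₁ + (1 + countNeg w x p₂) := by
        rw [heq, countNeg_append E w p₁ (x :: p₂) hw1, countNeg]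
        simp [hneg]
      -- p₁ is a minimum-weight walk to m
      have hminp₁ : walkWeight w s p₁ = dist m := by
        have h1 : dist m ≤ walkWeight w s p₁ := (hdist m).2 ⟨p₁, hw1, rfl⟩
        have h2 : dist v ≤ dist m + (w (m, x) + walkWeight w x p₂) := by
          have := hdist_le m v (x :: p₂) ⟨hE, hw2⟩
          simpa [walkWeight] using this
        omega
      have hcnp₁ : countNeg w s p₁ ≤ i := by omega
      have hdm : d m = dist m := H m ⟨p₁, hw1, hminp₁, hcnp₁⟩
      have h1 : d'' v ≤ d' x + walkWeight w0 x p₂ :=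
        (hd'' v).2 ⟨x, p₂, hw2, rfl⟩
      have h2 : d' x ≤ d m + w (m, x) :=
        (hd' x).2 (Set.mem_insert_of_mem _ ⟨m, hE, rfl⟩)
      have h3 : walkWeight w0 x p₂ = walkWeight w x p₂ :=
        walkWeight_w0_eq w w0 hw0 p₂ x hc0
      omega
  exact le_antisymm hle (part1 v)
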